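/- arXiv:1301.5033 — 5 statements merged into one kernel-verified Lean document; each statement's English description precedes it below -/
import Mathlib

section
/- For every real β ≥ 1 and all x > 0, the pair (y₁, y₂) satisfies the differential equation {−2Δ(x)·y₁'(x) + 2(x+β+1)·y₁(x) + 4β}·y₂'(x) + 2[(x+β+1)·y₁'(x) − y₁(x)]·y₂(x) + y₁'(x)·{4x·(y₁'(x))² + 2(x−β−1)·y₁'(x) − 4·y₁'(x)·y₁(x) − 2·y₁(x)} = 0. -/
/-- `Δ(x) = x² + 2(β+1)x + (β−1)²`. -/
noncomputable def Δ (β x : ℝ) : ℝ := x ^ 2 + 2 * (β + 1) * x + (β - 1) ^ 2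

/-- `y₁(x) = (√(Δ(x)) − x − (β+1))/2`. -/
noncomputable def y₁ (β x : ℝ) : ℝ := (Real.sqrt (Δ β x) - x - (β + 1)) / 2

/-- `y₂(x) = x/(2√(Δ(x))) − (x² + (β+1)x)/(2Δ(x))`. -/
noncomputable def y₂ (β x : ℝ) : ℝ :=
  x / (2 * Real.sqrt (Δ β x)) - (x ^ 2 + (β + 1) * x) / (2 * Δ β x)

theorem stmt3 (β : ℝ) (hβ : 1 ≤ β) :
    ∀ x > (0 : ℝ),
      (-2 * Δ β x * deriv (y₁ β) x + 2 * (x + β + 1) * y₁ β x + 4 * β) * deriv (y₂ β) x +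
          2 * ((x + β + 1) * deriv (y₁ β) x - y₁ β x) * y₂ β x +
          deriv (y₁ β) x *
            (4 * x * (deriv (y₁ β) x) ^ 2 + 2 * (x - β - 1) * deriv (y₁ β) x -
              4 * deriv (y₁ β) x * y₁ β x - 2 * y₁ β x) = 0 := by
  intro x hx
  have hΔ : 0 < Δ β x := by unfold Δ; nlinarith
  have hs : 0 < Real.sqrt (Δ β x) := Real.sqrt_pos.mpr hΔ
  have hs2 : Real.sqrt (Δ β x) ^ 2 = Δ β x := Real.sq_sqrt hΔ.le
  set s := Real.sqrt (Δ β x) with hsdef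
  -- derivative of Δ
  have hΔd : HasDerivAt (Δ β) (2 * x + 2 * (β + 1)) x := by
    have h : HasDerivAt (fun t : ℝ => t ^ 2 + 2 * (β + 1) * t + (β - 1) ^ 2)
        (2 * x + 2 * (β + 1)) x := by
      have h1 := hasDerivAt_pow 2 x
      have h2 := (hasDerivAt_id x).const_mul (2 * (β + 1))
      have := (h1.add h2).add_const ((β - 1) ^ 2)
      convert this using 1
      · rfl
      · rfl
      · rfl
      · norm_num
    exact h
  have hsd : HasDerivAt (fun t => Real.sqrt (Δ β t)) ((2 * x + 2 * (β + 1)) / (2 * s)) x :=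
    hΔd.sqrt hΔ.ne'
  have hy1d : HasDerivAt (y₁ β) (((2 * x + 2 * (β + 1)) / (2 * s) - 1) / 2) x := by
    have h := ((hsd.sub (hasDerivAt_id x)).sub_const (β + 1)).div_const 2
    exact h
  have hy2d : HasDerivAt (y₂ β)
      ((1 * (2 * s) - x * (2 * ((2 * x + 2 * (β + 1)) / (2 * s)))) / (2 * s) ^ 2 -
        ((2 * x + (β + 1)) * (2 * Δ β x) -
          (x ^ 2 + (β + 1) * x) * (2 * (2 * x + 2 * (β + 1)))) / (2 * Δ β x) ^ 2) x := by
    have ha : HasDerivAt (fun t : ℝ => t / (2 * Real.sqrt (Δ β t)))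
        ((1 * (2 * s) - x * (2 * ((2 * x + 2 * (β + 1)) / (2 * s)))) / (2 * s) ^ 2) x := by
      exact (hasDerivAt_id x).div (hsd.const_mul 2) (by positivity)
    have hb : HasDerivAt (fun t : ℝ => (t ^ 2 + (β + 1) * t) / (2 * Δ β t))
        (((2 * x + (β + 1)) * (2 * Δ β x) -
          (x ^ 2 + (β + 1) * x) * (2 * (2 * x + 2 * (β + 1)))) / (2 * Δ β x) ^ 2) x := by
      have hn : HasDerivAt (fun t : ℝ => t ^ 2 + (β + 1) * t) (2 * x + (β + 1)) x := by
        have h1 := hasDerivAt_pow 2 x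
        have h2 := (hasDerivAt_id x).const_mul (β + 1)
        convert h1.add h2 using 1
        · rfl
        · rfl
        · rfl
        · norm_num
      exact hn.div (hΔd.const_mul 2) (by positivity)
    exact ha.sub hb
  rw [hy1d.deriv, hy2d.deriv]
  unfold y₂ y₁
  rw [← hsdef, ← hs2]
  field_simp
  ring_nf
  have hs2' : s ^ 2 = x ^ 2 + 2 * (β + 1) * x + (β - 1) ^ 2 := by rw [hs2]; rfl
  linear_combination (4*s^3 - 8*s^2*x - 4*s^2*β - 4*s^2 - 4*s*x^2 - 4*s*x*β - 4*s*x + 8*x^3 + 16*x^2*β + 16*x^2 + 8*x*β^2 + 16*x*β + 8*x) * hs2'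
end

section
/- For every real β ≥ 1 and all x > 0, the pair (y₁, z₁) satisfies the differential equation {2β − Δ(x)·y₁'(x) + (x+β+1)·y₁(x)}·z₁'(x) + [(x+β+1)·y₁'(x) − y₁(x)]·z₁(x) + (x²/2)·(y₁''(x))² = 0. -/
noncomputable def z₁ (β x : ℝ) : ℝ := -β * x ^ 2 / (Δ β x) ^ ((5 : ℝ) / 2)

lemma dpos (β : ℝ) (hβ : 1 ≤ β) {x : ℝ} (hx : 0 < x) : 0 < Δ β x := by
  unfold Δ; nlinarith

lemma hasDerivAt_Δ (β x : ℝ) : HasDerivAt (Δ β) (2 * x + 2 * (β + 1)) x := by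
  unfold Δ
  have h1 : HasDerivAt (fun x : ℝ => x ^ 2) (2 * x) x := by
    simpa using hasDerivAt_pow 2 x
  have h2 : HasDerivAt (fun x : ℝ => 2 * (β + 1) * x) (2 * (β + 1)) x := by
    simpa using (hasDerivAt_id x).const_mul (2 * (β + 1))
  simpa using (h1.add h2).add_const ((β - 1) ^ 2)

lemma hasDerivAt_sqrtΔ (β : ℝ) (hβ : 1 ≤ β) {x : ℝ} (hx : 0 < x) :
    HasDerivAt (fun t => Real.sqrt (Δ β t)) ((x + β + 1) / Real.sqrt (Δ β x)) x := by
  have hΔ := dpos β hβ hx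
  have h := (Real.hasDerivAt_sqrt hΔ.ne').comp x (hasDerivAt_Δ β x)
  refine h.congr_deriv ?_
  have : Real.sqrt (Δ β x) ≠ 0 := (Real.sqrt_pos.mpr hΔ).ne'
  field_simp
  ring

lemma hasDerivAt_y₁ (β : ℝ) (hβ : 1 ≤ β) {x : ℝ} (hx : 0 < x) :
    HasDerivAt (y₁ β) (((x + β + 1) / Real.sqrt (Δ β x) - 1) / 2) x := by
  have h := (((hasDerivAt_sqrtΔ β hβ hx).sub (hasDerivAt_id x)).sub_const (β + 1)).div_const 2
  exact h

lemma deriv_y₁ (β : ℝ) (hβ : 1 ≤ β) {x : ℝ} (hx : 0 < x) :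
    deriv (y₁ β) x = ((x + β + 1) / Real.sqrt (Δ β x) - 1) / 2 :=
  (hasDerivAt_y₁ β hβ hx).deriv

lemma deriv2_y₁ (β : ℝ) (hβ : 1 ≤ β) {x : ℝ} (hx : 0 < x) :
    deriv (deriv (y₁ β)) x = -2 * β / (Real.sqrt (Δ β x)) ^ 3 := by
  have hev : deriv (y₁ β) =ᶠ[nhds x]
      fun t => ((t + β + 1) / Real.sqrt (Δ β t) - 1) / 2 := by
    filter_upwards [IsOpen.mem_nhds isOpen_Ioi hx] with t ht
    exact deriv_y₁ β hβ ht
  rw [hev.deriv_eq]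
  have hΔ := dpos β hβ hx
  have hs : Real.sqrt (Δ β x) ≠ 0 := (Real.sqrt_pos.mpr hΔ).ne'
  have hu : HasDerivAt (fun t : ℝ => t + β + 1) 1 x := by
    simpa using ((hasDerivAt_id x).add_const β).add_const 1
  have h := ((hu.div (hasDerivAt_sqrtΔ β hβ hx) hs).sub_const 1).div_const 2
  have h2 : HasDerivAt (fun t => ((t + β + 1) / Real.sqrt (Δ β t) - 1) / 2) _ x := h
  rw [h2.deriv]
  have hsq : Real.sqrt (Δ β x) ^ 2 = Δ β x := Real.sq_sqrt hΔ.le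
  have hΔu : Δ β x = (x + β + 1) ^ 2 - 4 * β := by unfold Δ; ring
  field_simp
  linear_combination hsq + hΔu

theorem stmt4 (β : ℝ) (hβ : 1 ≤ β) :
    ∀ x > (0 : ℝ),
      (2 * β - Δ β x * deriv (y₁ β) x + (x + β + 1) * y₁ β x) * deriv (z₁ β) x +
          ((x + β + 1) * deriv (y₁ β) x - y₁ β x) * z₁ β x +
          x ^ 2 / 2 * (deriv (deriv (y₁ β)) x) ^ 2 = 0 := by
  intro x hx
  have hΔ := dpos β hβ hx
  have hsp : 0 < Real.sqrt (Δ β x) := Real.sqrt_pos.mpr hΔ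
  have hs : Real.sqrt (Δ β x) ≠ 0 := hsp.ne'
  have hsq : Real.sqrt (Δ β x) ^ 2 = Δ β x := Real.sq_sqrt hΔ.le
  have h52 : (Δ β x) ^ ((5 : ℝ) / 2) = (Real.sqrt (Δ β x)) ^ 5 := by
    rw [Real.sqrt_eq_rpow, ← Real.rpow_natCast (Δ β x ^ ((1:ℝ)/2)) 5,
      ← Real.rpow_mul hΔ.le]
    norm_num
  have hA : 2 * β - Δ β x * deriv (y₁ β) x + (x + β + 1) * y₁ β x = 0 := by
    rw [deriv_y₁ β hβ hx]
    unfold y₁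
    have hΔu : Δ β x = (x + β + 1) ^ 2 - 4 * β := by unfold Δ; ring
    field_simp
    linear_combination (x+β+1)*hsq + √(Δ β x)*hΔu
  rw [hA, deriv_y₁ β hβ hx, deriv2_y₁ β hβ hx]
  unfold y₁ z₁
  rw [h52]
  have hΔu : Δ β x = (x + β + 1) ^ 2 - 4 * β := by unfold Δ; ring
  field_simp
  linear_combination β*x^2*hsq + β*x^2*hΔu
end

section
/- For every real β ≥ 1 and every P > 0, the improper integral ∫_{β/P}^{∞} [(x+β+1) − √(Δ(x))]/(2x) dx converges and equals μ̄₀(P). (Equivalently, the leading-order asymptotic mean of the MIMO mutual information, n·∫_{∞}^{β/P} y₁(x)/x dx with y₁(x) := (√(Δ(x)) − x − (β+1))/2, equals n·μ̄₀(P).) -/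
open MeasureTheory Filter Topology

/-- `a = (√β − 1)²`. -/
noncomputable def a (β : ℝ) : ℝ := (Real.sqrt β - 1) ^ 2

/-- `b = (√β + 1)²`. -/
noncomputable def b (β : ℝ) : ℝ := (Real.sqrt β + 1) ^ 2

/-- The leading-order asymptotic mean `μ̄₀(P)`. -/
noncomputable def mubar₀ (β P : ℝ) : ℝ :=
  ((a β + b β) / 2) *
      Real.log ((Real.sqrt (β + a β * P) + Real.sqrt (β + b β * P)) / (2 * Real.sqrt β)) -
    Real.sqrt (a β * b β) *
      Real.log ((Real.sqrt (a β * (β + b β * P)) + Real.sqrt (b β * (β + a β * P))) /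
        (Real.sqrt (a β * β) + Real.sqrt (b β * β))) -
    (Real.sqrt (β + a β * P) - Real.sqrt (β + b β * P)) ^ 2 / (4 * P)

/-- An antiderivative of `((x+β+1) − √Δ)/(2x)`. -/
noncomputable def Faux (β x : ℝ) : ℝ :=
  (x - Real.sqrt (Δ β x) + 2 * Real.log x
    - (β + 1) * Real.log (x + β + 1 + Real.sqrt (Δ β x))
    + (β - 1) * Real.log (2 * (β - 1) ^ 2 + 2 * (β + 1) * x
        + 2 * (β - 1) * Real.sqrt (Δ β x))) / 2

lemma key_algebra (β x S : ℝ) (hx : 0 < x) (hS : 0 < S)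
    (hS2 : S ^ 2 = x ^ 2 + 2 * (β + 1) * x + (β - 1) ^ 2)
    (hD : 0 < x + β + 1 + S)
    (hN : 0 < 2 * (β - 1) ^ 2 + 2 * (β + 1) * x + 2 * (β - 1) * S) :
    (1 - (2 * x + 2 * (β + 1)) / (2 * S) + 2 * x⁻¹
      - (β + 1) * ((1 + (2 * x + 2 * (β + 1)) / (2 * S)) / (x + β + 1 + S))
      + (β - 1) * ((2 * (β + 1) + 2 * (β - 1) * ((2 * x + 2 * (β + 1)) / (2 * S)))
          / (2 * (β - 1) ^ 2 + 2 * (β + 1) * x + 2 * (β - 1) * S))) / 2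
      = (x + β + 1 - S) / (2 * x) := by
  have h1 : (β + 1) * ((1 + (2 * x + 2 * (β + 1)) / (2 * S)) / (x + β + 1 + S))
      = (β + 1) / S := by
    field_simp
    ring
  have h2 : (β - 1) * ((2 * (β + 1) + 2 * (β - 1) * ((2 * x + 2 * (β + 1)) / (2 * S)))
      / (2 * (β - 1) ^ 2 + 2 * (β + 1) * x + 2 * (β - 1) * S))
      = (β - 1) * ((S - (β - 1)) / (x * S)) := by
    field_simp
    rw [div_eq_iff (ne_of_gt (by linarith))]
    linear_combination (-(β-1)^2) * hS2
  have h3 : 1 - (2 * x + 2 * (β + 1)) / (2 * S) + 2 * x⁻¹ - (β + 1) / S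
      + (β - 1) * ((S - (β - 1)) / (x * S)) = (x + β + 1 - S) / x := by
    field_simp
    linear_combination hS2
  rw [h1, h2, h3]
  rw [div_div, mul_comm x 2]

lemma delta_pos (β x : ℝ) (hβ : 1 ≤ β) (hx : 0 < x) : 0 < Δ β x := by
  have : 0 < β + 1 := by linarith
  unfold Δ
  positivity

lemma N_pos (β x : ℝ) (hβ : 1 ≤ β) (hx : 0 < x) :
    0 < 2 * (β - 1) ^ 2 + 2 * (β + 1) * x + 2 * (β - 1) * Real.sqrt (Δ β x) := by
  have h1 := Real.sqrt_nonneg (Δ β x)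
  nlinarith

lemma D_pos (β x : ℝ) (hβ : 1 ≤ β) (hx : 0 < x) :
    0 < x + β + 1 + Real.sqrt (Δ β x) := by
  have h1 := Real.sqrt_nonneg (Δ β x)
  linarith

lemma Faux_hasDerivAt (β : ℝ) (hβ : 1 ≤ β) (x : ℝ) (hx : 0 < x) :
    HasDerivAt (Faux β) ((x + β + 1 - Real.sqrt (Δ β x)) / (2 * x)) x := by
  have hΔpos := delta_pos β x hβ hx
  have hS : 0 < Real.sqrt (Δ β x) := Real.sqrt_pos.2 hΔpos
  have hS2 : Real.sqrt (Δ β x) ^ 2 = x ^ 2 + 2 * (β + 1) * x + (β - 1) ^ 2 := by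
    rw [Real.sq_sqrt hΔpos.le]; rfl
  have hD := D_pos β x hβ hx
  have hN := N_pos β x hβ hx
  have hΔ' : HasDerivAt (fun y => Δ β y) (2 * x + 2 * (β + 1)) x := by
    have h := ((hasDerivAt_pow 2 x).add (((hasDerivAt_id x).const_mul
      (2 * (β + 1))))).add_const ((β - 1) ^ 2)
    refine h.congr_deriv ?_
    norm_num
  have hS' : HasDerivAt (fun y => Real.sqrt (Δ β y))
      ((2 * x + 2 * (β + 1)) / (2 * Real.sqrt (Δ β x))) x := hΔ'.sqrt hΔpos.ne'
  have hlogx : HasDerivAt (fun y => 2 * Real.log y) (2 * x⁻¹) x :=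
    (Real.hasDerivAt_log hx.ne').const_mul 2
  have hD' : HasDerivAt (fun y => y + β + 1 + Real.sqrt (Δ β y))
      (1 + (2 * x + 2 * (β + 1)) / (2 * Real.sqrt (Δ β x))) x := by
    have h := (((hasDerivAt_id x).add_const β).add_const 1).add hS'
    exact h
  have hlogD : HasDerivAt (fun y => (β + 1) * Real.log (y + β + 1 + Real.sqrt (Δ β y)))
      ((β + 1) * ((1 + (2 * x + 2 * (β + 1)) / (2 * Real.sqrt (Δ β x)))
        / (x + β + 1 + Real.sqrt (Δ β x)))) x :=
    (hD'.log hD.ne').const_mul (β + 1)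
  have hN' : HasDerivAt (fun y => 2 * (β - 1) ^ 2 + 2 * (β + 1) * y
      + 2 * (β - 1) * Real.sqrt (Δ β y))
      (2 * (β + 1) + 2 * (β - 1) * ((2 * x + 2 * (β + 1)) / (2 * Real.sqrt (Δ β x)))) x := by
    have h := (((hasDerivAt_id x).const_mul (2 * (β + 1))).const_add
      (2 * (β - 1) ^ 2)).add (hS'.const_mul (2 * (β - 1)))
    refine h.congr_deriv ?_
    norm_num
  have hlogN : HasDerivAt (fun y => (β - 1) * Real.log (2 * (β - 1) ^ 2 + 2 * (β + 1) * y
      + 2 * (β - 1) * Real.sqrt (Δ β y)))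
      ((β - 1) * ((2 * (β + 1) + 2 * (β - 1) * ((2 * x + 2 * (β + 1))
        / (2 * Real.sqrt (Δ β x))))
        / (2 * (β - 1) ^ 2 + 2 * (β + 1) * x + 2 * (β - 1) * Real.sqrt (Δ β x)))) x :=
    (hN'.log hN.ne').const_mul (β - 1)
  have hF : HasDerivAt (Faux β)
      ((1 - (2 * x + 2 * (β + 1)) / (2 * Real.sqrt (Δ β x)) + 2 * x⁻¹
        - (β + 1) * ((1 + (2 * x + 2 * (β + 1)) / (2 * Real.sqrt (Δ β x)))
            / (x + β + 1 + Real.sqrt (Δ β x)))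
        + (β - 1) * ((2 * (β + 1) + 2 * (β - 1) * ((2 * x + 2 * (β + 1))
            / (2 * Real.sqrt (Δ β x))))
            / (2 * (β - 1) ^ 2 + 2 * (β + 1) * x
              + 2 * (β - 1) * Real.sqrt (Δ β x)))) / 2) x := by
    unfold Faux
    exact ((((hasDerivAt_id x).sub hS').add hlogx).sub hlogD).add hlogN |>.div_const 2
  rwa [key_algebra β x (Real.sqrt (Δ β x)) hx hS hS2 hD hN] at hF

lemma sqrt_div_tendsto (β : ℝ) (hβ : 1 ≤ β) :
    Tendsto (fun x => Real.sqrt (Δ β x) / x) atTop (𝓝 1) := by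
  have hq : Tendsto (fun x : ℝ => 1 + 2 * (β + 1) * x⁻¹ + (β - 1) ^ 2 * x⁻¹ ^ 2)
      atTop (𝓝 (1 + 2 * (β + 1) * 0 + (β - 1) ^ 2 * 0 ^ 2)) := by
    exact ((tendsto_const_nhds.add (tendsto_inv_atTop_zero.const_mul (2 * (β + 1)))).add
      ((tendsto_inv_atTop_zero.pow 2).const_mul ((β - 1) ^ 2)))
  have hq1 : Tendsto (fun x : ℝ => 1 + 2 * (β + 1) * x⁻¹ + (β - 1) ^ 2 * x⁻¹ ^ 2)
      atTop (𝓝 1) := by simpa using hq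
  have hsq : Tendsto (fun x : ℝ =>
      Real.sqrt (1 + 2 * (β + 1) * x⁻¹ + (β - 1) ^ 2 * x⁻¹ ^ 2)) atTop (𝓝 1) := by
    have := (Real.continuous_sqrt.continuousAt (x := (1:ℝ))).tendsto.comp hq1
    simpa [Function.comp_def] using this
  apply hsq.congr'
  filter_upwards [eventually_gt_atTop (0:ℝ)] with x hx
  have hΔ := delta_pos β x hβ hx
  rw [show (1 + 2 * (β + 1) * x⁻¹ + (β - 1) ^ 2 * x⁻¹ ^ 2) = Δ β x / x ^ 2 by
    rw [Δ]; field_simp]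
  rw [Real.sqrt_div hΔ.le, Real.sqrt_sq hx.le]

lemma Faux_tendsto (β : ℝ) (hβ : 1 ≤ β) :
    Tendsto (Faux β) atTop
      (𝓝 ((-(β + 1) + (β + 1) * Real.log (1 / 2) + (β - 1) * Real.log (4 * β)) / 2)) := by
  have hSx := sqrt_div_tendsto β hβ
  -- limit of x - sqrt (Δ β x)
  have h1 : Tendsto (fun x => x - Real.sqrt (Δ β x)) atTop (𝓝 (-(β + 1))) := by
    have hnum : Tendsto (fun x : ℝ => -(2 * (β + 1)) - (β - 1) ^ 2 * x⁻¹) atTop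
        (𝓝 (-(2 * (β + 1)))) := by
      simpa using Tendsto.const_sub (-(2 * (β + 1)))
        (tendsto_inv_atTop_zero.const_mul ((β - 1) ^ 2))
    have hden : Tendsto (fun x => 1 + Real.sqrt (Δ β x) / x) atTop (𝓝 2) := by
      have := (tendsto_const_nhds (x := (1:ℝ))).add hSx
      norm_num at this
      exact this
    have h := hnum.div hden (by norm_num)
    have h2 : -(2 * (β + 1)) / 2 = -(β + 1) := by ring
    rw [h2] at h
    apply h.congr'
    filter_upwards [eventually_gt_atTop (0:ℝ)] with x hx
    have hΔ := delta_pos β x hβ hx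
    have hS2 : Real.sqrt (Δ β x) ^ 2 = x ^ 2 + 2 * (β + 1) * x + (β - 1) ^ 2 := by
      rw [Real.sq_sqrt hΔ.le]; rfl
    have hdpos : 0 < 1 + Real.sqrt (Δ β x) / x := by
      have := Real.sqrt_nonneg (Δ β x); positivity
    simp only [Pi.div_apply]
    rw [eq_comm, eq_div_iff hdpos.ne']
    field_simp
    linear_combination -hS2
  -- limit of x / (x + β + 1 + sqrt (Δ β x))
  have h2 : Tendsto (fun x => x / (x + β + 1 + Real.sqrt (Δ β x))) atTop (𝓝 (1 / 2)) := by
    have hden : Tendsto (fun x : ℝ => 1 + (β + 1) * x⁻¹ + Real.sqrt (Δ β x) / x) atTop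
        (𝓝 2) := by
      have := ((tendsto_const_nhds (x := (1:ℝ))).add (tendsto_inv_atTop_zero.const_mul (β + 1))).add hSx
      norm_num at this
      exact this
    have h := (tendsto_const_nhds (x := (1:ℝ))).div hden (by norm_num)
    apply h.congr'
    filter_upwards [eventually_gt_atTop (0:ℝ)] with x hx
    have hD := D_pos β x hβ hx
    simp only [Pi.div_apply]
    rw [eq_comm, div_eq_div_iff hD.ne' (by
      have h0 := Real.sqrt_nonneg (Δ β x); positivity)]
    field_simp
    ring
  -- limit of N x / x
  have h3 : Tendsto (fun x => (2 * (β - 1) ^ 2 + 2 * (β + 1) * x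
      + 2 * (β - 1) * Real.sqrt (Δ β x)) / x) atTop (𝓝 (4 * β)) := by
    have h := ((tendsto_inv_atTop_zero.const_mul (2 * (β - 1) ^ 2)).add
      (tendsto_const_nhds (x := 2 * (β + 1)))).add (hSx.const_mul (2 * (β - 1)))
    have h4 : 2 * (β - 1) ^ 2 * 0 + 2 * (β + 1) + 2 * (β - 1) * 1 = 4 * β := by ring
    rw [h4] at h
    apply h.congr'
    filter_upwards [eventually_gt_atTop (0:ℝ)] with x hx
    field_simp
  have h4β : (4 : ℝ) * β ≠ 0 := by positivity
  have hall := ((h1.add ((h2.log (by norm_num)).const_mul (β + 1))).add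
    ((h3.log h4β).const_mul (β - 1))).div_const 2
  have hlim : (-(β + 1) + (β + 1) * Real.log (1 / 2) + (β - 1) * Real.log (4 * β)) / 2
      = (-(β + 1) + (β + 1) * Real.log (1 / 2) + (β - 1) * Real.log (4 * β)) / 2 := rfl
  apply hall.congr'
  filter_upwards [eventually_gt_atTop (0:ℝ)] with x hx
  have hΔ := delta_pos β x hβ hx
  have hD := D_pos β x hβ hx
  have hN := N_pos β x hβ hx
  unfold Faux
  rw [Real.log_div hx.ne' hD.ne', Real.log_div hN.ne' hx.ne']
  ring

lemma final_identity (β P : ℝ) (hβ : 1 ≤ β) (hP : 0 < P) :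
    (-(β + 1) + (β + 1) * Real.log (1 / 2) + (β - 1) * Real.log (4 * β)) / 2
      - Faux β (β / P) = mubar₀ β P := by
  have hβ0 : (0:ℝ) < β := by linarith
  obtain ⟨c, hβc, hc⟩ : ∃ c, β = c * P ∧ 0 < c :=
    ⟨β / P, by field_simp, div_pos hβ0 hP⟩
  have harg : β / P = c := by rw [hβc]; field_simp
  rw [harg]
  have hs1 : 1 ≤ Real.sqrt β := Real.one_le_sqrt.2 hβ
  have hs2 : Real.sqrt β ^ 2 = β := Real.sq_sqrt hβ0.le
  have hab_sum : a β + b β = 2 * (β + 1) := by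
    rw [a, b]; linear_combination 2 * hs2
  have hab_mul : a β * b β = (β - 1) ^ 2 := by
    rw [a, b]; linear_combination (Real.sqrt β ^ 2 + β - 2) * hs2
  have ha0 : 0 ≤ a β := sq_nonneg _
  have hb0 : 0 < b β := by
    rw [b]; nlinarith [Real.sqrt_nonneg β]
  have hsab : Real.sqrt (a β * b β) = β - 1 := by
    rw [hab_mul, Real.sqrt_sq (by linarith)]
  have hsa : Real.sqrt (a β) = Real.sqrt β - 1 := by
    rw [a, Real.sqrt_sq (by linarith)]
  have hsb : Real.sqrt (b β) = Real.sqrt β + 1 := by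
    rw [b, Real.sqrt_sq (by nlinarith [Real.sqrt_nonneg β])]
  have hβaP : 0 < β + a β * P := by nlinarith
  have hβbP : 0 < β + b β * P := by nlinarith
  have hΔc : Δ β c = (c + a β) * (c + b β) := by
    rw [Δ]; linear_combination (-c) * hab_sum - hab_mul
  have hΔc_pos : 0 < Δ β c := delta_pos β c hβ hc
  set S := Real.sqrt (Δ β c) with hS_def
  have hS_nn : 0 ≤ S := Real.sqrt_nonneg _
  have hS2 : S ^ 2 = Δ β c := Real.sq_sqrt hΔc_pos.le
  have hprod : (β + a β * P) * (β + b β * P) = P ^ 2 * Δ β c := by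
    rw [hΔc]
    linear_combination (β + c * P + (a β + b β) * P) * hβc
  have e1 : Real.sqrt (β + a β * P) * Real.sqrt (β + b β * P) = P * S := by
    rw [← Real.sqrt_mul hβaP.le, hprod, hS_def, Real.sqrt_mul (sq_nonneg P),
      Real.sqrt_sq hP.le]
  have e2 : Real.sqrt (β + a β * P) ^ 2 = β + a β * P := Real.sq_sqrt hβaP.le
  have e3 : Real.sqrt (β + b β * P) ^ 2 = β + b β * P := Real.sq_sqrt hβbP.le
  set N := 2 * (β - 1) ^ 2 + 2 * (β + 1) * c + 2 * (β - 1) * S with hN_def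
  have hN_pos : 0 < N := N_pos β c hβ hc
  have hD_pos : 0 < c + β + 1 + S := by linarith
  have hsum2P : β + a β * P + (β + b β * P) = 2 * P * (c + β + 1) := by
    linear_combination P * hab_sum + 2 * hβc
  have hsumsq : (Real.sqrt (β + a β * P) + Real.sqrt (β + b β * P)) ^ 2
      = 2 * P * (c + β + 1 + S) := by
    linear_combination e2 + e3 + 2 * e1 + hsum2P
  have hdiffsq : (Real.sqrt (β + a β * P) - Real.sqrt (β + b β * P)) ^ 2
      = 2 * P * (c + β + 1 - S) := by
    linear_combination e2 + e3 - 2 * e1 + hsum2P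
  -- log A
  have hApos : 0 < (Real.sqrt (β + a β * P) + Real.sqrt (β + b β * P))
      / (2 * Real.sqrt β) := by
    have h1 : 0 < Real.sqrt (β + a β * P) := Real.sqrt_pos.2 hβaP
    have h2 : 0 < Real.sqrt (β + b β * P) := Real.sqrt_pos.2 hβbP
    have h3 : 0 < Real.sqrt β := by linarith
    positivity
  have hA2 : ((Real.sqrt (β + a β * P) + Real.sqrt (β + b β * P))
      / (2 * Real.sqrt β)) ^ 2 = (c + β + 1 + S) / (2 * c) := by
    rw [div_pow, hsumsq]
    rw [div_eq_div_iff (by positivity) (by positivity)]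
    linear_combination (-4 * (c + β + 1 + S)) * hs2 + (-4 * (c + β + 1 + S)) * hβc
  have hlogA : Real.log ((Real.sqrt (β + a β * P) + Real.sqrt (β + b β * P))
      / (2 * Real.sqrt β))
      = (Real.log (c + β + 1 + S) - Real.log c - Real.log 2) / 2 := by
    have h2 := Real.log_pow ((Real.sqrt (β + a β * P) + Real.sqrt (β + b β * P))
      / (2 * Real.sqrt β)) 2
    rw [hA2, Real.log_div hD_pos.ne' (by positivity),
      Real.log_mul (by norm_num) hc.ne'] at h2
    push_cast at h2
    linarith
  -- log B
  have hden2β : Real.sqrt (a β * β) + Real.sqrt (b β * β) = 2 * β := by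
    rw [Real.sqrt_mul ha0, Real.sqrt_mul hb0.le, hsa, hsb]
    linear_combination 2 * hs2
  have e1' : Real.sqrt (a β * (β + b β * P)) * Real.sqrt (b β * (β + a β * P))
      = (β - 1) * (P * S) := by
    rw [Real.sqrt_mul ha0, Real.sqrt_mul hb0.le, show
      Real.sqrt (a β) * Real.sqrt (β + b β * P)
        * (Real.sqrt (b β) * Real.sqrt (β + a β * P))
      = (Real.sqrt (a β) * Real.sqrt (b β))
        * (Real.sqrt (β + a β * P) * Real.sqrt (β + b β * P)) by ring,
      ← Real.sqrt_mul ha0, hsab, e1]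
  have e2' : Real.sqrt (a β * (β + b β * P)) ^ 2 = a β * (β + b β * P) :=
    Real.sq_sqrt (by positivity)
  have e3' : Real.sqrt (b β * (β + a β * P)) ^ 2 = b β * (β + a β * P) :=
    Real.sq_sqrt (by positivity)
  have hx' : a β * (β + b β * P) + b β * (β + a β * P)
      = P * (2 * (β - 1) ^ 2 + 2 * (β + 1) * c) := by
    linear_combination β * hab_sum + 2 * P * hab_mul + 2 * (β + 1) * hβc
  have hsumsq' : (Real.sqrt (a β * (β + b β * P)) + Real.sqrt (b β * (β + a β * P))) ^ 2
      = P * N := by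
    rw [hN_def]
    linear_combination e2' + e3' + 2 * e1' + hx'
  have hBpos : 0 < (Real.sqrt (a β * (β + b β * P)) + Real.sqrt (b β * (β + a β * P)))
      / (Real.sqrt (a β * β) + Real.sqrt (b β * β)) := by
    have h1 : 0 ≤ Real.sqrt (a β * (β + b β * P)) := Real.sqrt_nonneg _
    have h2 : 0 < Real.sqrt (b β * (β + a β * P)) := Real.sqrt_pos.2 (by positivity)
    rw [hden2β]
    positivity
  have hB2 : ((Real.sqrt (a β * (β + b β * P)) + Real.sqrt (b β * (β + a β * P)))
      / (Real.sqrt (a β * β) + Real.sqrt (b β * β))) ^ 2 = N / (4 * β * c) := by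
    rw [hden2β, div_pow, hsumsq']
    rw [div_eq_div_iff (by positivity) (by positivity)]
    linear_combination (-4 * N * β) * hβc
  have hlogB : Real.log ((Real.sqrt (a β * (β + b β * P))
      + Real.sqrt (b β * (β + a β * P)))
      / (Real.sqrt (a β * β) + Real.sqrt (b β * β)))
      = (Real.log N - Real.log c - Real.log (4 * β)) / 2 := by
    have h2 := Real.log_pow ((Real.sqrt (a β * (β + b β * P))
      + Real.sqrt (b β * (β + a β * P)))
      / (Real.sqrt (a β * β) + Real.sqrt (b β * β))) 2
    rw [hB2, Real.log_div hN_pos.ne' (by positivity),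
      Real.log_mul (by positivity) hc.ne'] at h2
    push_cast at h2
    linarith
  have hT3 : (Real.sqrt (β + a β * P) - Real.sqrt (β + b β * P)) ^ 2 / (4 * P)
      = (c + β + 1 - S) / 2 := by
    rw [hdiffsq]; field_simp; ring
  rw [mubar₀, hlogA, hlogB, hT3, hsab, hab_sum, Faux]
  rw [show Real.log (1 / 2) = -Real.log 2 by rw [one_div, Real.log_inv]]
  rw [← hS_def, ← hN_def]
  ring

theorem stmt5 (β : ℝ) (hβ : 1 ≤ β) (P : ℝ) (hP : 0 < P) :
    IntegrableOn (fun x => ((x + β + 1) - Real.sqrt (Δ β x)) / (2 * x))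
        (Set.Ioi (β / P)) volume ∧
      ∫ x in Set.Ioi (β / P), ((x + β + 1) - Real.sqrt (Δ β x)) / (2 * x) = mubar₀ β P := by
  have hβ0 : (0:ℝ) < β := by linarith
  have hc : 0 < β / P := div_pos hβ0 hP
  have hderiv : ∀ x ∈ Set.Ici (β / P), HasDerivAt (Faux β)
      ((fun x => ((x + β + 1) - Real.sqrt (Δ β x)) / (2 * x)) x) x := by
    intro x hx
    have hx0 : 0 < x := lt_of_lt_of_le hc hx
    simpa using Faux_hasDerivAt β hβ x hx0
  have hpos : ∀ x ∈ Set.Ioi (β / P),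
      0 ≤ (fun x => ((x + β + 1) - Real.sqrt (Δ β x)) / (2 * x)) x := by
    intro x hx
    have hx0 : 0 < x := lt_trans hc hx
    have h1 : Real.sqrt (Δ β x) ≤ x + β + 1 := by
      have h2 : Δ β x ≤ (x + β + 1) ^ 2 := by rw [Δ]; nlinarith
      calc Real.sqrt (Δ β x) ≤ Real.sqrt ((x + β + 1) ^ 2) := Real.sqrt_le_sqrt h2
        _ = x + β + 1 := Real.sqrt_sq (by linarith)
    exact div_nonneg (by simpa using sub_nonneg.2 h1) (by linarith)
  have htend := Faux_tendsto β hβ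
  refine ⟨integrableOn_Ioi_deriv_of_nonneg' hderiv hpos htend, ?_⟩
  rw [integral_Ioi_of_hasDerivAt_of_nonneg' hderiv hpos htend]
  exact final_identity β P hβ hP
end

section
/- For every real β ≥ 1 and every P > 0, the improper integral 6·∫_{β/P}^{∞} (x² − (β−1)²)·(x+β+1−√(Δ(x))) / (2·Δ(x)^{5/2}) dx converges and equals C₃,₀(P). (This is the statement that the leading-order third cumulant 6·∫_{∞}^{β/P} y₃(x)/x dx, with y₃(x) := −(1/2)·x·(x+1−β)·(x−1+β)·(x+β+1−√(Δ(x)))/Δ(x)^{5/2}, equals C₃,₀(P).) -/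
open MeasureTheory Filter Set

/-- The leading-order third cumulant `C₃,₀(P)`. -/
noncomputable def C₃₀ (β P : ℝ) : ℝ :=
  (β + 1) / (2 * β) - 3 * β * P / (β ^ 2 + 2 * β * (β + 1) * P + (β - 1) ^ 2 * P ^ 2) -
    ((β - 1) ^ 2 * ((β ^ 2 + 1) * P ^ 3 + 3 * β * (β + 1) * P ^ 2) +
        3 * β ^ 2 * (β ^ 2 + 1) * P + β ^ 3 * (β + 1)) /
      (2 * β * (β ^ 2 + 2 * β * (β + 1) * P + (β - 1) ^ 2 * P ^ 2) ^ ((3 : ℝ) / 2))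

lemma rpow_3h {A : ℝ} (hA : 0 < A) : A ^ ((3:ℝ)/2) = A * Real.sqrt A := by
  rw [Real.sqrt_eq_rpow, show (3:ℝ)/2 = 1 + 1/2 by norm_num, Real.rpow_add hA, Real.rpow_one]

lemma rpow_5h {A : ℝ} (hA : 0 < A) : A ^ ((5:ℝ)/2) = A ^ 2 * Real.sqrt A := by
  rw [Real.sqrt_eq_rpow, show (5:ℝ)/2 = 2 + 1/2 by norm_num, Real.rpow_add hA,
    show ((2:ℝ)) = ((2:ℕ):ℝ) by norm_num, Real.rpow_natCast]

lemma Δ_pos {β x : ℝ} (hβ : 1 ≤ β) (hx : 0 < x) : 0 < Δ β x := by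
  unfold Δ; nlinarith [sq_nonneg (β - 1), sq_nonneg x]

noncomputable def Nq (β x : ℝ) : ℝ :=
  (β+1)*x^3 + 3*(β^2+1)*x^2 + 3*(β+1)*(β-1)^2*x + (β-1)^2*(β^2+1)

noncomputable def Fa (β x : ℝ) : ℝ :=
  3*x/(Δ β x) + Nq β x/(2*β*(Δ β x) ^ ((3:ℝ)/2))

lemma hasDerivAt_Fa {β x : ℝ} (hβ : 1 ≤ β) (hx : 0 < x) :
    HasDerivAt (Fa β)
      (6 * ((x ^ 2 - (β - 1) ^ 2) * (x + β + 1 - Real.sqrt (Δ β x)) /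
        (2 * (Δ β x) ^ ((5 : ℝ) / 2)))) x := by
  have hβ0 : (0:ℝ) < β := by linarith
  have hD : 0 < Δ β x := Δ_pos hβ hx
  have hs : 0 < Real.sqrt (Δ β x) := Real.sqrt_pos.2 hD
  have hΔ : HasDerivAt (Δ β) (2*x + 2*(β+1)) x := by
    unfold Δ
    have h := ((hasDerivAt_pow 2 x).add
      (((hasDerivAt_id x).const_mul (2*(β+1))))).add_const ((β-1)^2)
    exact h.congr_deriv (by ring)
  have hN : HasDerivAt (Nq β) (3*(β+1)*x^2 + 6*(β^2+1)*x + 3*(β+1)*(β-1)^2) x := by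
    unfold Nq
    have h := ((((hasDerivAt_pow 3 x).const_mul (β+1)).add
      ((hasDerivAt_pow 2 x).const_mul (3*(β^2+1)))).add
      (((hasDerivAt_id x).const_mul (3*(β+1)*(β-1)^2)))).add_const ((β-1)^2*(β^2+1))
    exact h.congr_deriv (by ring)
  have h1 : HasDerivAt (fun y => 3*y/(Δ β y))
      ((3 * Δ β x - 3*x*(2*x + 2*(β+1)))/(Δ β x)^2) x := by
    have h := ((hasDerivAt_id x).const_mul 3).div hΔ hD.ne'
    exact h.congr_deriv (by simp [id])
  have h32 : HasDerivAt (fun y => (Δ β y) ^ ((3:ℝ)/2))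
      ((2*x + 2*(β+1)) * ((3:ℝ)/2) * (Δ β x) ^ ((3:ℝ)/2 - 1)) x :=
    hΔ.rpow_const (Or.inl hD.ne')
  have hden : 2*β*(Δ β x) ^ ((3:ℝ)/2) ≠ 0 := by
    have := Real.rpow_pos_of_pos hD ((3:ℝ)/2); positivity
  have h2 : HasDerivAt (fun y => Nq β y/(2*β*(Δ β y) ^ ((3:ℝ)/2)))
      (((3*(β+1)*x^2 + 6*(β^2+1)*x + 3*(β+1)*(β-1)^2) * (2*β*(Δ β x) ^ ((3:ℝ)/2)) -
        Nq β x * (2*β*((2*x + 2*(β+1)) * ((3:ℝ)/2) * (Δ β x) ^ ((3:ℝ)/2 - 1)))) /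
        (2*β*(Δ β x) ^ ((3:ℝ)/2))^2) x :=
    hN.div (h32.const_mul (2*β)) hden
  have h := h1.add h2
  refine h.congr_deriv ?_
  rw [rpow_3h hD, rpow_5h hD, show (3:ℝ)/2 - 1 = 1/2 by norm_num, ← Real.sqrt_eq_rpow]
  set s := Real.sqrt (Δ β x) with hsdef
  have hDx : Δ β x = x ^ 2 + 2 * (β + 1) * x + (β - 1) ^ 2 := rfl
  rw [hDx]
  unfold Nq
  field_simp
  ring

lemma sq_rpow_3h {x : ℝ} (hx : 0 < x) : (x^2) ^ ((3:ℝ)/2) = x^3 := by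
  rw [rpow_3h (by positivity), Real.sqrt_sq hx.le]; ring

lemma tendsto_Fa {β : ℝ} (hβ : 1 ≤ β) :
    Filter.Tendsto (Fa β) Filter.atTop (nhds ((β+1)/(2*β))) := by
  have hβ0 : (0:ℝ) < β := by linarith
  have t1 : Filter.Tendsto (fun x => 3*x/(Δ β x)) Filter.atTop (nhds 0) := by
    have hdiv : Filter.Tendsto (fun x : ℝ => Δ β x / x) Filter.atTop Filter.atTop := by
      apply Filter.tendsto_atTop_mono' Filter.atTop
        (_ : (fun x:ℝ => x) ≤ᶠ[Filter.atTop] fun x => Δ β x / x) Filter.tendsto_id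
      filter_upwards [Filter.eventually_ge_atTop 1] with x hx
      have hx0 : (0:ℝ) < x := lt_of_lt_of_le one_pos hx
      rw [le_div_iff₀ hx0]; unfold Δ; nlinarith [sq_nonneg (β-1)]
    have h := (tendsto_const_nhds (x := (3:ℝ))).div_atTop hdiv
    apply h.congr'
    filter_upwards [Filter.eventually_gt_atTop 0] with x hx
    rw [div_div_eq_mul_div]
  have t2 : Filter.Tendsto (fun x => Nq β x/(2*β*(Δ β x) ^ ((3:ℝ)/2))) Filter.atTop
      (nhds ((β+1)/(2*β))) := by
    have c1 : Filter.Tendsto (fun x:ℝ => 3*(β^2+1)/x) Filter.atTop (nhds 0) :=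
      tendsto_const_nhds.div_atTop Filter.tendsto_id
    have c2 : Filter.Tendsto (fun x:ℝ => 3*(β+1)*(β-1)^2/x^2) Filter.atTop (nhds 0) :=
      tendsto_const_nhds.div_atTop (tendsto_pow_atTop (by norm_num))
    have c3 : Filter.Tendsto (fun x:ℝ => (β-1)^2*(β^2+1)/x^3) Filter.atTop (nhds 0) :=
      tendsto_const_nhds.div_atTop (tendsto_pow_atTop (by norm_num))
    have c4 : Filter.Tendsto (fun x:ℝ => 2*(β+1)/x) Filter.atTop (nhds 0) :=
      tendsto_const_nhds.div_atTop Filter.tendsto_id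
    have c5 : Filter.Tendsto (fun x:ℝ => (β-1)^2/x^2) Filter.atTop (nhds 0) :=
      tendsto_const_nhds.div_atTop (tendsto_pow_atTop (by norm_num))
    have tnum : Filter.Tendsto (fun x => Nq β x / x^3) Filter.atTop (nhds (β+1)) := by
      have h := ((tendsto_const_nhds (x := β+1)).add c1).add (c2.add c3)
      norm_num at h
      apply h.congr'
      filter_upwards [Filter.eventually_gt_atTop 0] with x hx
      unfold Nq; field_simp; ring
    have tden : Filter.Tendsto (fun x => Δ β x / x^2) Filter.atTop (nhds 1) := by
      have h := ((tendsto_const_nhds (x := (1:ℝ))).add c4).add c5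
      norm_num at h
      apply h.congr'
      filter_upwards [Filter.eventually_gt_atTop 0] with x hx
      unfold Δ; field_simp
    have trpow : Filter.Tendsto (fun x => (Δ β x / x^2) ^ ((3:ℝ)/2)) Filter.atTop (nhds 1) := by
      have hc : ContinuousAt (fun t:ℝ => t ^ ((3:ℝ)/2)) 1 :=
        Real.continuousAt_rpow_const 1 _ (Or.inl one_ne_zero)
      have h := hc.tendsto.comp tden
      simpa [Function.comp_def, Real.one_rpow] using h
    have h := tnum.div ((trpow.const_mul (2*β))) (by norm_num; positivity)
    norm_num at h
    apply h.congr'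
    filter_upwards [Filter.eventually_gt_atTop 0] with x hx
    have hD := Δ_pos hβ hx
    show (Nq β x / x^3) / (2*β*(Δ β x / x^2) ^ ((3:ℝ)/2)) = _
    rw [Real.div_rpow hD.le (sq_nonneg x), sq_rpow_3h hx]
    have h3 : (0:ℝ) < x^3 := by positivity
    have hr : (0:ℝ) < (Δ β x) ^ ((3:ℝ)/2) := Real.rpow_pos_of_pos hD _
    field_simp
  have h := t1.add t2
  norm_num at h
  exact h

lemma contOn_f6 {β a : ℝ} (hβ : 1 ≤ β) (ha : 0 < a) :
    ContinuousOn (fun x => 6 * ((x ^ 2 - (β - 1) ^ 2) * (x + β + 1 - Real.sqrt (Δ β x)) /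
      (2 * (Δ β x) ^ ((5 : ℝ) / 2)))) (Set.Ioi a) := by
  have hΔc : Continuous (Δ β) := by unfold Δ; continuity
  apply ContinuousOn.mul continuousOn_const
  apply ContinuousOn.div
  · apply ContinuousOn.mul (by fun_prop)
    exact ((continuous_id.add continuous_const).add continuous_const).continuousOn.sub
      (hΔc.sqrt.continuousOn)
  · exact continuousOn_const.mul (hΔc.continuousOn.rpow_const fun x _ => Or.inr (by norm_num))
  · intro x hx
    have hD := Δ_pos hβ (lt_trans ha hx)
    have := Real.rpow_pos_of_pos hD ((5:ℝ)/2)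
    positivity

lemma integrable_f6 {β a : ℝ} (hβ : 1 ≤ β) (ha : 0 < a) :
    IntegrableOn (fun x => 6 * ((x ^ 2 - (β - 1) ^ 2) * (x + β + 1 - Real.sqrt (Δ β x)) /
      (2 * (Δ β x) ^ ((5 : ℝ) / 2)))) (Set.Ioi a) volume := by
  have hβ0 : (0:ℝ) < β := by linarith
  have hg : IntegrableOn (fun x : ℝ => 12*β * x ^ (-4:ℝ)) (Set.Ioi a) volume :=
    (integrableOn_Ioi_rpow_of_lt (by norm_num) ha).const_mul _
  apply hg.mono' ((contOn_f6 hβ ha).aestronglyMeasurable measurableSet_Ioi)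
  rw [ae_restrict_iff' measurableSet_Ioi]
  apply Filter.Eventually.of_forall
  intro x hx
  have hxa : a < x := hx
  have hx0 : 0 < x := lt_trans ha hxa
  have hD := Δ_pos hβ hx0
  set s := Real.sqrt (Δ β x) with hsdef
  have hs0 : 0 < s := Real.sqrt_pos.2 hD
  have hs2 : s^2 = Δ β x := Real.sq_sqrt hD.le
  have hDx : Δ β x = x ^ 2 + 2 * (β + 1) * x + (β - 1) ^ 2 := rfl
  have hsx : x ≤ s := by
    rw [show x = Real.sqrt (x^2) from (Real.sqrt_sq hx0.le).symm]
    apply Real.sqrt_le_sqrt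
    rw [hDx]; nlinarith [sq_nonneg (β-1)]
  have hkey : (x+β+1-s)*(x+β+1+s) = 4*β := by
    rw [hDx] at hs2; nlinarith [hs2]
  have hdpos : 0 < x+β+1+s := by positivity
  have hsub_eq : x+β+1-s = 4*β/(x+β+1+s) := by
    field_simp
    linarith [hkey]
  have hsub_nonneg : 0 ≤ x+β+1-s := by rw [hsub_eq]; positivity
  have hsub_le : x+β+1-s ≤ 4*β/x := by
    rw [hsub_eq]
    gcongr
    linarith
  have habs : |x^2 - (β-1)^2| ≤ Δ β x := by
    rw [abs_le, hDx]
    constructor <;> nlinarith [sq_nonneg (β-1), sq_nonneg x]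
  have hgx : 12*β * x ^ (-4:ℝ) = 12*β/x^4 := by
    rw [show (-4:ℝ) = -((4:ℕ):ℝ) by norm_num, Real.rpow_neg hx0.le, Real.rpow_natCast]
    ring
  rw [hgx, Real.norm_eq_abs]
  have e1 : |6 * ((x ^ 2 - (β - 1) ^ 2) * (x + β + 1 - s) / (2 * (Δ β x) ^ ((5:ℝ)/2)))| =
      6 * (|x ^ 2 - (β - 1) ^ 2| * (x + β + 1 - s)) / (2 * ((Δ β x)^2 * s)) := by
    rw [rpow_5h hD, abs_mul, abs_div, abs_mul, abs_of_nonneg hsub_nonneg,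
      abs_of_pos (show (0:ℝ) < 2 * ((Δ β x)^2 * s) by positivity)]
    norm_num [mul_div_assoc]
  rw [e1]
  calc 6 * (|x ^ 2 - (β - 1) ^ 2| * (x + β + 1 - s)) / (2 * ((Δ β x)^2 * s))
      ≤ 6 * (Δ β x * (4*β/x)) / (2 * ((Δ β x)^2 * s)) := by
        gcongr
    _ = 12*β/(x * (Δ β x * s)) := by
        field_simp
        ring
    _ ≤ 12*β/(x * (x^2 * x)) := by
        have hxx : x^2 ≤ Δ β x := by rw [hDx]; nlinarith [sq_nonneg (β-1)]
        have hle : x * (x^2*x) ≤ x * (Δ β x * s) := by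
          have h1 : x^2*x ≤ Δ β x * s := mul_le_mul hxx hsx hx0.le hD.le
          exact mul_le_mul_of_nonneg_left h1 hx0.le
        exact div_le_div_of_nonneg_left (by positivity) (by positivity) hle
    _ = 12*β/x^4 := by ring_nf

lemma contOn_Fa {β a : ℝ} (hβ : 1 ≤ β) (ha : 0 < a) :
    ContinuousOn (Fa β) (Set.Ici a) := by
  have hβ0 : (0:ℝ) < β := by linarith
  have hΔc : Continuous (Δ β) := by unfold Δ; continuity
  have hNc : Continuous (Nq β) := by unfold Nq; continuity
  unfold Fa
  apply ContinuousOn.add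
  · exact ContinuousOn.div (by fun_prop) hΔc.continuousOn
      (fun x hx => (Δ_pos hβ (lt_of_lt_of_le ha hx)).ne')
  · apply ContinuousOn.div hNc.continuousOn
      (continuousOn_const.mul (hΔc.continuousOn.rpow_const fun x _ => Or.inr (by norm_num)))
    intro x hx
    have := Real.rpow_pos_of_pos (Δ_pos hβ (lt_of_lt_of_le ha hx)) ((3:ℝ)/2)
    exact mul_ne_zero (by positivity) this.ne'


theorem stmt7 (β : ℝ) (hβ : 1 ≤ β) (P : ℝ) (hP : 0 < P) :
    IntegrableOn
        (fun x => 6 * ((x ^ 2 - (β - 1) ^ 2) * (x + β + 1 - Real.sqrt (Δ β x)) /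
          (2 * (Δ β x) ^ ((5 : ℝ) / 2)))) (Set.Ioi (β / P)) volume ∧
      ∫ x in Set.Ioi (β / P),
          6 * ((x ^ 2 - (β - 1) ^ 2) * (x + β + 1 - Real.sqrt (Δ β x)) /
            (2 * (Δ β x) ^ ((5 : ℝ) / 2))) = C₃₀ β P := by
  have hβ0 : (0:ℝ) < β := by linarith
  have ha : 0 < β/P := by positivity
  refine ⟨integrable_f6 hβ ha, ?_⟩
  rw [integral_Ioi_of_hasDerivAt_of_tendsto
    ((contOn_Fa hβ ha).continuousWithinAt Set.self_mem_Ici)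
    (fun x hx => hasDerivAt_Fa hβ (lt_trans ha hx))
    (integrable_f6 hβ ha) (tendsto_Fa hβ)]
  have hQ : (0:ℝ) < β ^ 2 + 2 * β * (β + 1) * P + (β - 1) ^ 2 * P ^ 2 := by
    nlinarith [sq_nonneg ((β-1)*P)]
  have hDa : Δ β (β/P) = (β ^ 2 + 2 * β * (β + 1) * P + (β - 1) ^ 2 * P ^ 2)/P^2 := by
    unfold Δ; field_simp
  unfold Fa Nq C₃₀
  rw [hDa, Real.div_rpow hQ.le (sq_nonneg P), sq_rpow_3h hP]
  have hr : (0:ℝ) < (β ^ 2 + 2 * β * (β + 1) * P + (β - 1) ^ 2 * P ^ 2) ^ ((3:ℝ)/2) :=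
    Real.rpow_pos_of_pos hQ _
  field_simp
  ring
end

section
/- Let m > n > 0 be real numbers and let λ be a real number with |λ| < m − n. Then the series ∑_{ℓ=3}^{∞} ((−λ)^ℓ / (ℓ·(ℓ−1)·(ℓ−2))) · [ (m−n)^{2−ℓ} − m^{2−ℓ} ] converges and equals −nλ/2 + ((λ+m)²/2)·ln(1 + λ/m) − ((λ+m−n)²/2)·ln(1 + λ/(m−n)). (This sums the high-SNR leading-order cumulant series κ_ℓ = (−1)^ℓ (ℓ−3)! [ (m−n)^{2−ℓ} − m^{2−ℓ} ], ℓ ≥ 3, into the closed-form high-SNR cumulant generating function.) -/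
lemma aux15 (y : ℝ) (hy : |y| < 1) :
    HasSum (fun k : ℕ => y ^ (k + 3) / (((k : ℝ) + 3) * ((k : ℝ) + 2) * ((k : ℝ) + 1)))
      ((1 - y) ^ 2 / 2 * (-Real.log (1 - y)) + (3 * y ^ 2 - 2 * y) / 4) := by
  have h1 := Real.hasSum_pow_div_log_of_abs_lt_one hy
  have h2 := (hasSum_nat_add_iff' (f := fun n : ℕ => y ^ (n + 1) / ((n : ℝ) + 1)) 1).2 h1
  have h3 := (hasSum_nat_add_iff' (f := fun n : ℕ => y ^ (n + 1) / ((n : ℝ) + 1)) 2).2 h1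
  norm_num [Finset.sum_range_succ] at h2 h3
  have hc := ((h1.mul_left (y ^ 2 / 2)).sub (h2.mul_left y)).add (h3.mul_left (1 / 2))
  push_cast at hc
  have hfun : (fun k : ℕ => y ^ 2 / 2 * (y ^ (k + 1) / ((k : ℝ) + 1)) -
        y * (y ^ (k + 1 + 1) / ((k : ℝ) + 1 + 1)) +
        1 / 2 * (y ^ (k + 2 + 1) / ((k : ℝ) + 2 + 1))) =
      fun k : ℕ => y ^ (k + 3) / (((k : ℝ) + 3) * ((k : ℝ) + 2) * ((k : ℝ) + 1)) := by
    funext k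
    have h1 : (k : ℝ) + 1 ≠ 0 := by positivity
    have h2 : (k : ℝ) + 2 ≠ 0 := by positivity
    have h3 : (k : ℝ) + 3 ≠ 0 := by positivity
    field_simp
    ring
  rw [hfun] at hc
  convert hc using 1
  case e'_3 => rfl
  ring

theorem stmt15 (m n lam : ℝ) (hn : 0 < n) (hm : n < m) (hlam : |lam| < m - n) :
    HasSum
      (fun k : ℕ =>
        ((-lam) ^ (k + 3) / (((k : ℝ) + 3) * ((k : ℝ) + 2) * ((k : ℝ) + 1))) *
          (1 / (m - n) ^ (k + 1) - 1 / m ^ (k + 1)))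
      (-(n * lam) / 2 + ((lam + m) ^ 2 / 2) * Real.log (1 + lam / m) -
        ((lam + m - n) ^ 2 / 2) * Real.log (1 + lam / (m - n))) := by
  have hmn : (0:ℝ) < m - n := by linarith
  have hm0 : (0:ℝ) < m := by linarith
  have hy1 : |(-lam) / (m - n)| < 1 := by
    rw [abs_div, abs_neg, abs_of_pos hmn, div_lt_one hmn]; exact hlam
  have hy2 : |(-lam) / m| < 1 := by
    rw [abs_div, abs_neg, abs_of_pos hm0, div_lt_one hm0]
    calc |lam| < m - n := hlam
    _ < m := by linarith
  have ha := (aux15 _ hy1).mul_left ((m - n) ^ 2)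
  have hb := (aux15 _ hy2).mul_left (m ^ 2)
  have hsum := ha.sub hb
  have hfun : (fun k : ℕ =>
      (m - n) ^ 2 * ((-lam / (m - n)) ^ (k + 3) / (((k : ℝ) + 3) * ((k : ℝ) + 2) * ((k : ℝ) + 1))) -
      m ^ 2 * ((-lam / m) ^ (k + 3) / (((k : ℝ) + 3) * ((k : ℝ) + 2) * ((k : ℝ) + 1)))) =
      fun k : ℕ =>
        ((-lam) ^ (k + 3) / (((k : ℝ) + 3) * ((k : ℝ) + 2) * ((k : ℝ) + 1))) *
          (1 / (m - n) ^ (k + 1) - 1 / m ^ (k + 1)) := by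
    funext k
    have h1 : (k : ℝ) + 1 ≠ 0 := by positivity
    have h2 : (k : ℝ) + 2 ≠ 0 := by positivity
    have h3 : (k : ℝ) + 3 ≠ 0 := by positivity
    rw [div_pow, div_pow]
    have e1 : (m - n) ^ (k + 3) = (m - n) ^ (k + 1) * (m - n) ^ 2 := by ring
    have e2 : m ^ (k + 3) = m ^ (k + 1) * m ^ 2 := by ring
    field_simp [e1, e2]
    ring
  rw [hfun] at hsum
  convert hsum using 1
  case e'_3 => rfl
  have l1 : (1 : ℝ) - -lam / (m - n) = 1 + lam / (m - n) := by ring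
  have l2 : (1 : ℝ) - -lam / m = 1 + lam / m := by ring
  rw [l1, l2]
  have q1 : (m - n) ^ 2 * ((1 + lam / (m - n)) ^ 2 / 2) = (lam + m - n) ^ 2 / 2 := by
    field_simp; ring
  have q2 : m ^ 2 * ((1 + lam / m) ^ 2 / 2) = (lam + m) ^ 2 / 2 := by
    field_simp; ring
  have : (m - n) ^ 2 * ((1 + lam / (m - n)) ^ 2 / 2 * -Real.log (1 + lam / (m - n)) +
      (3 * (-lam / (m - n)) ^ 2 - 2 * (-lam / (m - n))) / 4) -
      m ^ 2 * ((1 + lam / m) ^ 2 / 2 * -Real.log (1 + lam / m) +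
      (3 * (-lam / m) ^ 2 - 2 * (-lam / m)) / 4) =
      (m - n) ^ 2 * ((1 + lam / (m - n)) ^ 2 / 2) * -Real.log (1 + lam / (m - n)) -
      m ^ 2 * ((1 + lam / m) ^ 2 / 2) * -Real.log (1 + lam / m) +
      ((m - n) ^ 2 * ((3 * (-lam / (m - n)) ^ 2 - 2 * (-lam / (m - n))) / 4) -
       m ^ 2 * ((3 * (-lam / m) ^ 2 - 2 * (-lam / m)) / 4)) := by ring
  rw [this, q1, q2]
  have q3 : (m - n) ^ 2 * ((3 * (-lam / (m - n)) ^ 2 - 2 * (-lam / (m - n))) / 4) -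
      m ^ 2 * ((3 * (-lam / m) ^ 2 - 2 * (-lam / m)) / 4) = -(n * lam) / 2 := by
    field_simp
    ring
  rw [q3]
  ring
end
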